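/- For all integers r ≥ 0, ℓ ≥ 1, and q ≥ 0 the following holds. Let x = (x_e)_{e ∈ E_{ℓ,q}} and let x' = (x'_e)_{e ∈ E'_{ℓ,q}} agree with x on E_{ℓ,q} and have x'_e = 1 for every new edge e ∈ E'_{ℓ,q}∖E_{ℓ,q}. If x' ∈ N_+^r(ST(G'_{ℓ,q})), then x ∈ N_+^r(SP(G_{ℓ,q}, s, t)). -/

import Mathlib

open Finset

namespace TSPGap


/-! ### Lovász–Schrijver lift-and-project operators -/

/-- `cone(R) = {(λ, λx) : λ ≥ 0, x ∈ R}`, with the extra 0th coordinate first. -/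
def lsCone {ι : Type*} (R : Set (ι → ℝ)) : Set (ℝ × (ι → ℝ)) :=
  {p | ∃ c : ℝ, ∃ y ∈ R, 0 ≤ c ∧ p.1 = c ∧ p.2 = fun i => c * y i}

/-- `X` is a protection matrix witnessing `x ∈ N(R)`: it is symmetric, its 0th row and
diagonal both equal `(1, x)`, and each row `X_i` and difference `X_0 - X_i` lies in `cone(R)`. -/
def IsProtection {ι : Type*} (R : Set (ι → ℝ)) (x : ι → ℝ)
    (X : Option ι → Option ι → ℝ) : Prop :=
  (∀ i j, X i j = X j i) ∧
  X none none = 1 ∧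
  (∀ i, X none (some i) = x i) ∧
  (∀ i, X (some i) (some i) = x i) ∧
  (∀ i, (X (some i) none, fun j => X (some i) (some j)) ∈ lsCone R) ∧
  (∀ i, (X none none - X (some i) none,
         fun j => X none (some j) - X (some i) (some j)) ∈ lsCone R)

/-- The Lovász–Schrijver `N` operator. -/
def lsN {ι : Type*} (R : Set (ι → ℝ)) : Set (ι → ℝ) :=
  {x | ∃ X : Option ι → Option ι → ℝ, IsProtection R x X}

/-- The Lovász–Schrijver `N₊` operator (protection matrix additionally PSD). -/
def lsNplus {ι : Type*} [Fintype ι] (R : Set (ι → ℝ)) : Set (ι → ℝ) :=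
  {x | ∃ X : Matrix (Option ι) (Option ι) ℝ, X.PosSemidef ∧
        IsProtection R x (fun i j => X i j)}

/-! ### Directed graphs -/

variable {V : Type*} [DecidableEq V]

/-- The list of (directed) steps of a walk given by its list of vertices. -/
def dSteps (l : List V) : List (V × V) := l.zip l.tail

/-- The steps of a closed walk given by its list of vertices. -/
def cycSteps (l : List V) : List (V × V) := l.zip (l.rotate 1)

/-- `l` is a directed walk from `u` to `v` using edges of `E`. -/
def IsDWalk (E : Finset (V × V)) (u v : V) (l : List V) : Prop :=
  l.head? = some u ∧ l.getLast? = some v ∧ ∀ a ∈ dSteps l, a ∈ E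

/-- Total weight of a walk. -/
def dWalkWeight (w : V × V → ℝ) (l : List V) : ℝ := ((dSteps l).map w).sum

/-- Shortest-path distance from `u` to `v` in the weighted directed graph `(E, w)`. -/
noncomputable def dDist (E : Finset (V × V)) (w : V × V → ℝ) (u v : V) : ℝ :=
  sInf {c | ∃ l : List V, IsDWalk E u v l ∧ dWalkWeight w l = c}

/-- `x(δ⁺(S))`. -/
def outCut (E : Finset (V × V)) (x : ↥E → ℝ) (S : Finset V) : ℝ :=
  ∑ e ∈ E.attach.filter (fun e => e.val.1 ∈ S ∧ e.val.2 ∉ S), x e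

/-- `x(δ⁻(S))`. -/
def inCut (E : Finset (V × V)) (x : ↥E → ℝ) (S : Finset V) : ℝ :=
  ∑ e ∈ E.attach.filter (fun e => e.val.1 ∉ S ∧ e.val.2 ∈ S), x e

/-- `d · x = ∑_e d_e x_e` over the edge set `E`. -/
def dDot (E : Finset (V × V)) (d : V × V → ℝ) (x : ↥E → ℝ) : ℝ :=
  ∑ e ∈ E.attach, d e.val * x e

/-- The balanced asymmetric tour polytope of the directed graph with node set `VS`
and edge set `E`. -/
def ATbal (VS : Finset V) (E : Finset (V × V)) : Set (↥E → ℝ) :=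
  {x | (∀ e, 0 ≤ x e ∧ x e ≤ 1) ∧
       (∀ S : Finset V, S ⊆ VS → S.Nonempty → S ≠ VS →
          1 ≤ outCut E x S ∧ 1 ≤ inCut E x S) ∧
       (∀ v ∈ VS, outCut E x {v} = inCut E x {v})}

/-- Indicator vectors of Hamiltonian cycles (on node set `VS`) among edges `E`. -/
def hamCycleVecs (VS : Finset V) (E : Finset (V × V)) : Set (↥E → ℝ) :=
  {x | ∃ c : List V, 2 ≤ c.length ∧ c.Nodup ∧ c.toFinset = VS ∧
        (∀ a ∈ cycSteps c, a ∈ E) ∧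
        ∀ e : ↥E, x e = if e.val ∈ cycSteps c then 1 else 0}

/-- Edge set of the complete directed graph on the node set `VS` (no self-loops). -/
def dComplete (VS : Finset V) : Finset (V × V) := (VS ×ˢ VS).filter (fun e => e.1 ≠ e.2)

/-- Edge set of the complete directed graph on all of `V` (no self-loops). -/
def dCompleteAll (V : Type*) [Fintype V] [DecidableEq V] : Finset (V × V) :=
  Finset.univ.filter (fun e => e.1 ≠ e.2)

/-- Out-degree of `v` in edge set `E`. -/
def outDeg (E : Finset (V × V)) (v : V) : ℕ := (E.filter (fun e => e.1 = v)).card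

/-- In-degree of `v` in edge set `E`. -/
def inDeg (E : Finset (V × V)) (v : V) : ℕ := (E.filter (fun e => e.2 = v)).card

/-- A frame for the edge `e = (u,v)`: a set `F ⊆ E \ {e}` consisting of an edge-simple
path from `u` to `v` together with zero or more edge-simple cycles, all pairwise
edge-disjoint. -/
def IsFrame (E : Finset (V × V)) (e : V × V) (F : Finset (V × V)) : Prop :=
  F ⊆ E.erase e ∧
  ∃ (p : List V) (cs : List (List V)),
    p.head? = some e.1 ∧ p.getLast? = some e.2 ∧ (∀ a ∈ dSteps p, a ∈ E) ∧
    (∀ c ∈ cs, c ≠ [] ∧ ∀ a ∈ cycSteps c, a ∈ E) ∧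
    (dSteps p ++ (cs.map cycSteps).flatten).Nodup ∧
    F = (dSteps p ++ (cs.map cycSteps).flatten).toFinset

/-- There exist two edge-disjoint directed (simple) paths from `u` to `v` in `E`. -/
def TwoEdgeDisjointPaths (E : Finset (V × V)) (u v : V) : Prop :=
  ∃ p q : List V, p.Nodup ∧ q.Nodup ∧
    p.head? = some u ∧ p.getLast? = some v ∧
    q.head? = some u ∧ q.getLast? = some v ∧
    (∀ a ∈ dSteps p, a ∈ E) ∧ (∀ a ∈ dSteps q, a ∈ E) ∧
    (dSteps p).Disjoint (dSteps q)




/-! ### The Charikar–Goemans–Karloff graphs -/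

/-- Vertex type housing the graph `G_{k,r}` (index `k = 0` is a dummy level). -/
def CGKV : ℕ → Type
  | 0 => PUnit
  | 1 => ℕ
  | k + 2 => (ℕ × CGKV (k + 1)) ⊕ Fin 2

instance CGKV.decEq : (k : ℕ) → DecidableEq (CGKV k)
  | 0 => inferInstanceAs (DecidableEq PUnit)
  | 1 => inferInstanceAs (DecidableEq ℕ)
  | k + 2 =>
      letI : DecidableEq (CGKV (k + 1)) := CGKV.decEq (k + 1)
      inferInstanceAs (DecidableEq ((ℕ × CGKV (k + 1)) ⊕ Fin 2))

/-- The source of `G_{k,r}`. -/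
def CGKsrc (r : ℕ) : (k : ℕ) → CGKV k
  | 0 => PUnit.unit
  | 1 => (0 : ℕ)
  | _ + 2 => Sum.inr 0

/-- The sink of `G_{k,r}`. -/
def CGKsnk (r : ℕ) : (k : ℕ) → CGKV k
  | 0 => PUnit.unit
  | 1 => (r + 1 : ℕ)
  | _ + 2 => Sum.inr 1

/-- The node set of `G_{k,r}`. -/
def CGKVS (r : ℕ) : (k : ℕ) → Finset (CGKV k)
  | 0 => ∅
  | 1 => Finset.range (r + 2)
  | k + 2 =>
      ((Finset.range r) ×ˢ CGKVS r (k + 1)).image Sum.inl ∪ {Sum.inr 0, Sum.inr 1}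

/-- The edge set of `G_{k,r}`: at level 1, two oppositely-directed paths of `r+1` edges
on the nodes `0, …, r+1`; at level `k+2`, the edges of the `r` copies of `G_{k+1,r}`
together with a path from the source `s` through the copies' sources to the sink `t`,
and a path from `t` through the copies' sinks (in the opposite order) back to `s`. -/
def CGKE (r : ℕ) : (k : ℕ) → Finset (CGKV k × CGKV k)
  | 0 => ∅
  | 1 => (dSteps (List.range (r + 2))).toFinset ∪
         (dSteps (List.range (r + 2)).reverse).toFinset
  | k + 2 =>
      (Finset.range r).biUnion
        (fun j => (CGKE r (k + 1)).image (fun e => (Sum.inl (j, e.1), Sum.inl (j, e.2)))) ∪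
      (dSteps (Sum.inr 0 ::
        ((List.range r).map (fun j => Sum.inl (j, CGKsrc r (k + 1)))) ++ [Sum.inr 1])).toFinset ∪
      (dSteps (Sum.inr 1 ::
        (((List.range r).map (fun j => Sum.inl (j, CGKsnk r (k + 1)))).reverse) ++ [Sum.inr 0])).toFinset

/-- Edge weights of `G_{k,r}` (and of `L_{k,r}`): level-`ℓ` edges have weight `r^(ℓ-1)`. -/
def CGKw (r : ℕ) : (k : ℕ) → CGKV k × CGKV k → ℝ
  | 0, _ => 0
  | 1, _ => 1
  | k + 2, e =>
      match e with
      | (Sum.inl (j, u), Sum.inl (j', v)) =>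
          if j = j' then CGKw r (k + 1) (u, v) else (r : ℝ) ^ (k + 1)
      | _ => (r : ℝ) ^ (k + 1)

/-- `v₁`: the successor of `s` on the forward path of `G_{k,r}`. -/
def Lv1 (r : ℕ) : (k : ℕ) → CGKV k
  | 0 => PUnit.unit
  | 1 => (1 : ℕ)
  | k + 2 => Sum.inl (0, CGKsrc r (k + 1))

/-- `v₂`: the predecessor of `t` on the forward path of `G_{k,r}`. -/
def Lv2 (r : ℕ) : (k : ℕ) → CGKV k
  | 0 => PUnit.unit
  | 1 => (r : ℕ)
  | k + 2 => Sum.inl (r - 1, CGKsrc r (k + 1))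

/-- `v₃`: the successor of `t` on the backward path of `G_{k,r}`. -/
def Lv3 (r : ℕ) : (k : ℕ) → CGKV k
  | 0 => PUnit.unit
  | 1 => (r : ℕ)
  | k + 2 => Sum.inl (r - 1, CGKsnk r (k + 1))

/-- `v₄`: the predecessor of `s` on the backward path of `G_{k,r}`. -/
def Lv4 (r : ℕ) : (k : ℕ) → CGKV k
  | 0 => PUnit.unit
  | 1 => (1 : ℕ)
  | k + 2 => Sum.inl (0, CGKsnk r (k + 1))

/-- The node set `V_{k,r}` of `L_{k,r}`: the nodes of `G_{k,r}` minus the two terminals. -/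
def LVS (r k : ℕ) : Finset (CGKV k) :=
  ((CGKVS r k).erase (CGKsrc r k)).erase (CGKsnk r k)

/-- The edge set `E_{k,r}` of `L_{k,r}`: the edges of `G_{k,r}` not incident to a terminal,
plus the two new edges `(v₂,v₁)` and `(v₄,v₃)`. -/
def LE (r k : ℕ) : Finset (CGKV k × CGKV k) :=
  (CGKE r k).filter (fun e =>
    e.1 ≠ CGKsrc r k ∧ e.1 ≠ CGKsnk r k ∧ e.2 ≠ CGKsrc r k ∧ e.2 ≠ CGKsnk r k) ∪
  {(Lv2 r k, Lv1 r k), (Lv4 r k, Lv3 r k)}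



/-! ### Undirected graphs -/

variable {V : Type*} [DecidableEq V]

/-- The (undirected) steps of a walk given by its list of vertices. -/
def uSteps (l : List V) : List (Sym2 V) := (l.zip l.tail).map (Function.uncurry Sym2.mk)

/-- `l` is a walk from `u` to `v` in the undirected edge set `E`. -/
def IsUWalk (E : Finset (Sym2 V)) (u v : V) (l : List V) : Prop :=
  l.head? = some u ∧ l.getLast? = some v ∧ ∀ e ∈ uSteps l, e ∈ E

/-- Whether the undirected edge `e` crosses the cut `(S, S̄)`. -/
def uCrosses (S : Finset V) (e : Sym2 V) : Bool :=
  Sym2.lift ⟨fun a b => xor (decide (a ∈ S)) (decide (b ∈ S)),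
    fun a b => Bool.xor_comm _ _⟩ e

/-- `x(δ(S))`. -/
def uCut (E : Finset (Sym2 V)) (x : ↥E → ℝ) (S : Finset V) : ℝ :=
  ∑ e ∈ E.attach.filter (fun e => uCrosses S e.val), x e

/-- `d · x = ∑_e d_e x_e` over the undirected edge set `E`. -/
def uDot (E : Finset (Sym2 V)) (d : Sym2 V → ℝ) (x : ↥E → ℝ) : ℝ :=
  ∑ e ∈ E.attach, d e.val * x e

/-- The symmetric tour polytope of the undirected graph with node set `VS`, edges `E`. -/
def STpoly (VS : Finset V) (E : Finset (Sym2 V)) : Set (↥E → ℝ) :=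
  {x | (∀ e, 0 ≤ x e ∧ x e ≤ 1) ∧
       (∀ S : Finset V, S ⊆ VS → S.Nonempty → S ≠ VS → 2 ≤ uCut E x S) ∧
       (∀ v ∈ VS, uCut E x {v} = 2)}

/-- The symmetric path polytope of the undirected graph with node set `VS`, edges `E`,
and endpoints `s`, `t`. -/
def SPpoly (VS : Finset V) (E : Finset (Sym2 V)) (s t : V) : Set (↥E → ℝ) :=
  {x | (∀ e, 0 ≤ x e ∧ x e ≤ 1) ∧
       (∀ S : Finset V, S ⊆ VS → S.Nonempty → S ≠ VS →
          (((s ∈ S) ↔ (t ∈ S)) → 2 ≤ uCut E x S) ∧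
          (¬((s ∈ S) ↔ (t ∈ S)) → 1 ≤ uCut E x S)) ∧
       (∀ v ∈ VS, v ≠ s → v ≠ t → uCut E x {v} = 2) ∧
       uCut E x {s} = 1 ∧ uCut E x {t} = 1}

/-- Indicator vectors of Hamiltonian paths from `s` to `t` (on node set `VS`) among
edges `E`. -/
def uHamPathVecs (VS : Finset V) (E : Finset (Sym2 V)) (s t : V) : Set (↥E → ℝ) :=
  {x | ∃ p : List V, p.Nodup ∧ p.toFinset = VS ∧
        p.head? = some s ∧ p.getLast? = some t ∧
        (∀ e ∈ uSteps p, e ∈ E) ∧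
        ∀ e : ↥E, x e = if e.val ∈ uSteps p then 1 else 0}

/-- Edge set of the complete undirected graph on all of `V` (no self-loops). -/
def uCompleteAll (V : Type*) [Fintype V] [DecidableEq V] : Finset (Sym2 V) :=
  Finset.univ.filter (fun e => ¬ e.IsDiag)

/-- Shortest-path distance (number of edges) between the endpoints of `e`, in the
unweighted undirected graph with edge set `E`. -/
noncomputable def uDist (E : Finset (Sym2 V)) (e : Sym2 V) : ℝ :=
  sInf {c | ∃ u v : V, e = s(u, v) ∧
    ∃ l : List V, IsUWalk E u v l ∧ ((uSteps l).length : ℝ) = c}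

/-! ### Cheung's graphs -/

/-- The node set `V_{ℓ,q}` of Cheung's graph `G_{ℓ,q}`: a top path and a bottom path of
`ℓ+1` nodes each, a left and a right clique of `3q+3` nodes each, and nodes `s`, `t`. -/
inductive ChV (l q : ℕ) where
  | top : Fin (l + 1) → ChV l q
  | bot : Fin (l + 1) → ChV l q
  | left : Fin (3 * q + 3) → ChV l q
  | right : Fin (3 * q + 3) → ChV l q
  | vs : ChV l q
  | vt : ChV l q
deriving DecidableEq, Fintype

/-- The edges of the two paths of `G_{ℓ,q}`. -/
def ChEpaths (l q : ℕ) : Finset (Sym2 (ChV l q)) :=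
  (Finset.univ : Finset (Fin l)).image
    (fun i => s(ChV.top i.castSucc, ChV.top i.succ)) ∪
  (Finset.univ : Finset (Fin l)).image
    (fun i => s(ChV.bot i.castSucc, ChV.bot i.succ))

/-- The edges within the two cliques of `G_{ℓ,q}`. -/
def ChEcliques (l q : ℕ) : Finset (Sym2 (ChV l q)) :=
  ((Finset.univ : Finset (Fin (3 * q + 3) × Fin (3 * q + 3))).filter
      (fun p => p.1 ≠ p.2)).image (fun p => s(ChV.left p.1, ChV.left p.2)) ∪
  ((Finset.univ : Finset (Fin (3 * q + 3) × Fin (3 * q + 3))).filter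
      (fun p => p.1 ≠ p.2)).image (fun p => s(ChV.right p.1, ChV.right p.2))

/-- The connection edges of `G_{ℓ,q}`: path endpoints to the cliques, `s` to the left
clique, and `t` to the right clique. -/
def ChEconn (l q : ℕ) : Finset (Sym2 (ChV l q)) :=
  (Finset.univ : Finset (Fin (3 * q + 3))).image (fun i => s(ChV.top 0, ChV.left i)) ∪
  (Finset.univ : Finset (Fin (3 * q + 3))).image (fun i => s(ChV.bot 0, ChV.left i)) ∪
  (Finset.univ : Finset (Fin (3 * q + 3))).image
    (fun i => s(ChV.top (Fin.last l), ChV.right i)) ∪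
  (Finset.univ : Finset (Fin (3 * q + 3))).image
    (fun i => s(ChV.bot (Fin.last l), ChV.right i)) ∪
  (Finset.univ : Finset (Fin (3 * q + 3))).image (fun i => s(ChV.vs, ChV.left i)) ∪
  (Finset.univ : Finset (Fin (3 * q + 3))).image (fun i => s(ChV.vt, ChV.right i))

/-- The edge set `E_{ℓ,q}` of Cheung's graph `G_{ℓ,q}`. -/
def ChE (l q : ℕ) : Finset (Sym2 (ChV l q)) :=
  ChEpaths l q ∪ ChEcliques l q ∪ ChEconn l q

/-- The node set of `G'_{ℓ,q}`: `G_{ℓ,q}` plus `ℓ-1` new internal path nodes. -/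
inductive ChV' (l q : ℕ) where
  | old : ChV l q → ChV' l q
  | mid : Fin (l - 1) → ChV' l q
deriving DecidableEq, Fintype

/-- The new `s`–`t` path of `G'_{ℓ,q}` (as a list of nodes; it has `ℓ` edges). -/
def ChPathList (l q : ℕ) : List (ChV' l q) :=
  ChV'.old ChV.vs :: ((List.finRange (l - 1)).map ChV'.mid ++ [ChV'.old ChV.vt])

/-- The edge set `E'_{ℓ,q}` of `G'_{ℓ,q}`: the (old) edges of `G_{ℓ,q}` together with the
`ℓ` new edges of a path from `s` to `t` through `ℓ-1` new nodes. -/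
def ChE' (l q : ℕ) : Finset (Sym2 (ChV' l q)) :=
  (ChE l q).image (Sym2.map ChV'.old) ∪ (uSteps (ChPathList l q)).toFinset

/-! Fixing the new path edges of `G'_{ℓ,q}` at `1`, every constraint of `ST(G'_{ℓ,q})` on a cut
`old(T)` becomes one of `SP(G_{ℓ,q}, s, t)`: the new path crosses such a cut once if `T` separates
`s` from `t` and not at all if `T` avoids both (the remaining cuts are complements of those).
For `N₊`, if `X` is a PSD protection matrix and `x_f = 1`, then `X₀₀ = X₀f = X_ff = 1` forces
column `f` of `X` to equal column `0`; hence every `X_i` and `X₀ - X_i` lies in the cone over the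
face `x_f = 1`, and the principal submatrix on the old coordinates protects the restriction of
`x`. Induction on `r` finishes the proof. -/

open Matrix in
theorem _root_.Matrix.PosSemidef.col_eq_col_of_eq {n : Type*} [Fintype n] {X : Matrix n n ℝ}
    (hX : X.PosSemidef) {i j : n} (hij : X i j = X i i) (hjj : X j j = X i i) (k : n) :
    X k i = X k j := by
  classical
  have hji : X j i = X i j := by simpa using congrFun₂ hX.1 i j
  set v : n → ℝ := Pi.single i 1 - Pi.single j 1
  have hXv : X *ᵥ v = fun k => X k i - X k j := by
    ext k; simp [v, Matrix.mulVec_sub]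
  have hquad : star v ⬝ᵥ X *ᵥ v = 0 := by
    rw [hXv]
    simp [v, sub_dotProduct, hij, hjj, hji]
  have := congrFun ((hX.dotProduct_mulVec_zero_iff v).mp hquad) k
  rw [hXv] at this
  exact sub_eq_zero.mp this

section LovaszSchrijver

variable {ι ι' : Type*} {R : Set (ι → ℝ)} {R' : Set (ι' → ℝ)} (emb : ι → ι') (New : Set ι')

@[simp]
theorem mk_mem_lsCone {c : ℝ} {z : ι' → ℝ} :
    (c, z) ∈ lsCone R' ↔ 0 ≤ c ∧ ∃ y ∈ R', z = fun i => c * y i := by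
  constructor
  · rintro ⟨c, y, hy, hc, rfl, hz⟩
    exact ⟨hc, y, hy, hz⟩
  · rintro ⟨hc, y, hy, hz⟩
    exact ⟨c, y, hy, hc, rfl, hz⟩

theorem exists_mem_of_mk_mem_lsCone {c : ℝ} {z : ι' → ℝ} (hp : (c, z) ∈ lsCone R')
    (hz : ∀ f ∈ New, z f = c) (hc : c ≠ 0) :
    ∃ y ∈ R', (∀ f ∈ New, y f = 1) ∧ z = fun i => c * y i := by
  obtain ⟨-, y, hy, rfl⟩ := mk_mem_lsCone.mp hp
  exact ⟨y, hy, fun f hf => mul_left_cancel₀ hc ((hz f hf).trans (mul_one c).symm), rfl⟩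

variable {emb New}

theorem comp_mk_mem_lsCone (hR : ∀ y ∈ R', (∀ f ∈ New, y f = 1) → y ∘ emb ∈ R)
    (hne : R.Nonempty) {c : ℝ} {z : ι' → ℝ} (hp : (c, z) ∈ lsCone R')
    (hz : ∀ f ∈ New, z f = c) : (c, z ∘ emb) ∈ lsCone R := by
  rcases (mk_mem_lsCone.mp hp).1.eq_or_lt with rfl | hpos
  · obtain ⟨-, y, -, rfl⟩ := mk_mem_lsCone.mp hp
    exact mk_mem_lsCone.mpr ⟨le_rfl, hne.some, hne.some_mem, by ext; simp⟩
  · obtain ⟨y, hy, hyNew, rfl⟩ := exists_mem_of_mk_mem_lsCone New hp hz hpos.ne'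
    exact mk_mem_lsCone.mpr ⟨hpos.le, y ∘ emb, hR y hy hyNew, rfl⟩

theorem comp_mem_lsNplus [Fintype ι] [Fintype ι']
    (hR : ∀ y ∈ R', (∀ f ∈ New, y f = 1) → y ∘ emb ∈ R) {x : ι' → ℝ} (hx : x ∈ lsNplus R')
    (hNew : ∀ f ∈ New, x f = 1) : x ∘ emb ∈ lsNplus R := by
  obtain ⟨X, hX, hsym, h00, h0, hdiag, hrow, hdiff⟩ := hx
  dsimp only at hsym h00 h0 hdiag hrow hdiff
  have hcol : ∀ f ∈ New, ∀ k, X k (some f) = X k none := fun f hf k =>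
    (hX.col_eq_col_of_eq (by rw [h0, hNew f hf, h00]) (by rw [hdiag, hNew f hf, h00]) k).symm
  have hne (i : ι') : R.Nonempty := by
    by_cases hc : X (some i) none = 0
    · obtain ⟨y, hy, hyNew, -⟩ := exists_mem_of_mk_mem_lsCone New (hdiff i)
        (fun f hf => by simp only [hcol f hf]) (by simp [hc, h00])
      exact ⟨y ∘ emb, hR y hy hyNew⟩
    · obtain ⟨y, hy, hyNew, -⟩ := exists_mem_of_mk_mem_lsCone New (hrow i)
        (fun f hf => hcol f hf _) hc
      exact ⟨y ∘ emb, hR y hy hyNew⟩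
  refine ⟨X.submatrix (Option.map emb) (Option.map emb), hX.submatrix _, fun i j => hsym _ _,
    h00, fun i => h0 (emb i), fun i => hdiag (emb i), fun i => ?_, fun i => ?_⟩
  · exact comp_mk_mem_lsCone hR (hne (emb i)) (hrow (emb i)) fun f hf => hcol f hf _
  · exact comp_mk_mem_lsCone hR (hne (emb i)) (hdiff (emb i)) fun f hf => by simp only [hcol f hf]

theorem comp_mem_lsNplus_iterate [Fintype ι] [Fintype ι']
    (hR : ∀ y ∈ R', (∀ f ∈ New, y f = 1) → y ∘ emb ∈ R) (r : ℕ) :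
    ∀ y ∈ lsNplus^[r] R', (∀ f ∈ New, y f = 1) → y ∘ emb ∈ lsNplus^[r] R := by
  induction r with
  | zero => exact hR
  | succ r ih =>
    simp only [Function.iterate_succ_apply']
    exact fun y hy => comp_mem_lsNplus ih hy

end LovaszSchrijver

section Cuts

@[simp]
theorem uCrosses_mk (S : Finset V) (a b : V) :
    uCrosses S s(a, b) = xor (decide (a ∈ S)) (decide (b ∈ S)) := rfl

theorem uSteps_cons_cons {α : Type*} (a b : α) (l : List α) :
    uSteps (a :: b :: l) = s(a, b) :: uSteps (b :: l) := rfl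

theorem exists_eq_mk_of_mem_uSteps {α : Type*} {l : List α} {e : Sym2 α} (he : e ∈ uSteps l) :
    ∃ u ∈ l, ∃ v ∈ l, e = s(u, v) := by
  obtain ⟨⟨u, v⟩, hz, rfl⟩ := List.mem_map.mp he
  exact ⟨u, (List.of_mem_zip hz).1, v, List.mem_of_mem_tail (List.of_mem_zip hz).2, rfl⟩

theorem mem_or_eq_of_mem_uSteps_cons_append {α : Type*} {a z : α} :
    ∀ {l : List α} {e : Sym2 α}, e ∈ uSteps (a :: (l ++ [z])) → (∃ v ∈ l, v ∈ e) ∨ e = s(a, z)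
  | [], e, he => by simpa [uSteps] using he
  | b :: l, e, he => by
    rw [List.cons_append, uSteps_cons_cons, List.mem_cons] at he
    rcases he with rfl | he
    · exact .inl ⟨b, List.mem_cons_self, Sym2.mem_mk_right a b⟩
    · rcases mem_or_eq_of_mem_uSteps_cons_append he with ⟨v, hv, hve⟩ | rfl
      · exact .inl ⟨v, List.mem_cons_of_mem b hv, hve⟩
      · exact .inl ⟨b, List.mem_cons_self, Sym2.mem_mk_left b z⟩

theorem filter_uCrosses_uSteps_eq_empty {S : Finset V} {l : List V} (hl : ∀ v ∈ l, v ∉ S) :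
    (uSteps l).toFinset.filter (uCrosses S ·) = ∅ := by
  refine Finset.filter_eq_empty_iff.mpr fun e he => ?_
  obtain ⟨u, hu, v, hv, rfl⟩ := exists_eq_mk_of_mem_uSteps (List.mem_toFinset.mp he)
  simp [hl u hu, hl v hv]

theorem card_filter_uCrosses_uSteps_append {S : Finset V} :
    ∀ {u w : List V}, u ≠ [] → w ≠ [] → (∀ v ∈ u, v ∈ S) → (∀ v ∈ w, v ∉ S) →
      #((uSteps (u ++ w)).toFinset.filter (uCrosses S ·)) = 1
  | [a], c :: w, _, _, hu, hw => by
    rw [List.singleton_append, uSteps_cons_cons, List.toFinset_cons, Finset.filter_insert,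
      filter_uCrosses_uSteps_eq_empty hw]
    simp [hu a (by simp), hw c (by simp)]
  | a :: b :: u, w, _, hw₀, hu, hw => by
    rw [List.cons_append, List.cons_append, uSteps_cons_cons, ← List.cons_append,
      List.toFinset_cons, Finset.filter_insert, if_neg (by simp [hu a (by simp), hu b (by simp)])]
    exact card_filter_uCrosses_uSteps_append (List.cons_ne_nil b u) hw₀
      (fun v hv => hu v (List.mem_cons_of_mem a hv)) hw

theorem uCrosses_compl [Fintype V] (S : Finset V) (e : Sym2 V) :
    uCrosses (Finset.univ \ S) e = uCrosses S e := by
  induction e using Sym2.ind with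
  | _ a b => by_cases ha : a ∈ S <;> by_cases hb : b ∈ S <;> simp [ha, hb]

theorem uCut_compl [Fintype V] (E : Finset (Sym2 V)) (x : ↥E → ℝ) (S : Finset V) :
    uCut E x (Finset.univ \ S) = uCut E x S := by
  simp only [uCut, uCrosses_compl]

theorem uCut_eq_sum {E : Finset (Sym2 V)} {x : ↥E → ℝ} {g : Sym2 V → ℝ} (hg : ∀ e, x e = g e)
    (S : Finset V) : uCut E x S = ∑ e ∈ E.filter (uCrosses S ·), g e := by
  rw [uCut, Finset.sum_filter, Finset.sum_filter, ← Finset.sum_attach E]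
  simp only [hg]

end Cuts

section Cheung

variable {l q : ℕ}

theorem mk_vs_vt_not_mem_ChE : s(ChV.vs, ChV.vt) ∉ ChE l q := by
  simp [ChE, ChEpaths, ChEcliques, ChEconn]

theorem disjoint_image_ChE_uSteps_ChPathList :
    Disjoint ((ChE l q).image (Sym2.map ChV'.old)) (uSteps (ChPathList l q)).toFinset := by
  refine Finset.disjoint_left.mpr fun e he he' => ?_
  obtain ⟨f, hf, rfl⟩ := Finset.mem_image.mp he
  rcases mem_or_eq_of_mem_uSteps_cons_append (List.mem_toFinset.mp he') with ⟨v, hv, hvf⟩ | h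
  · obtain ⟨i, -, rfl⟩ := List.mem_map.mp hv
    simp at hvf
  · rw [← Sym2.map_mk, (Sym2.map.injective fun _ _ => ChV'.old.inj).eq_iff] at h
    exact mk_vs_vt_not_mem_ChE (h ▸ hf)

variable (l q) in
def ChEmb (e : ↥(ChE l q)) : ↥(ChE' l q) :=
  ⟨Sym2.map ChV'.old e.val, Finset.mem_union_left _ (Finset.mem_image_of_mem _ e.2)⟩

theorem uCrosses_image_old (T : Finset (ChV l q)) (e : Sym2 (ChV l q)) :
    uCrosses (T.image ChV'.old) (Sym2.map ChV'.old e) = uCrosses T e := by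
  induction e using Sym2.ind with
  | _ a b => simp

theorem uCut_ChE'_image_old {y : ↥(ChE' l q) → ℝ}
    (hnew : ∀ e : ↥(ChE' l q), e.val ∉ (ChE l q).image (Sym2.map ChV'.old) → y e = 1)
    (T : Finset (ChV l q)) :
    uCut (ChE' l q) y (T.image ChV'.old) = uCut (ChE l q) (y ∘ ChEmb l q) T +
      #((uSteps (ChPathList l q)).toFinset.filter (uCrosses (T.image ChV'.old) ·)) := by
  set g : Sym2 (ChV' l q) → ℝ := fun e => if h : e ∈ ChE' l q then y ⟨e, h⟩ else 0
  have hg : ∀ e, y e = g e := fun e => by simp [g]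
  have hg' : ∀ e, (y ∘ ChEmb l q) e = (g ∘ Sym2.map ChV'.old) e := fun e => hg (ChEmb l q e)
  rw [uCut_eq_sum hg, uCut_eq_sum hg',
    ChE', Finset.filter_union, Finset.sum_union (Finset.disjoint_filter_filter
      disjoint_image_ChE_uSteps_ChPathList), Finset.filter_image,
    Finset.sum_image fun _ _ _ _ h => Sym2.map.injective (fun _ _ => ChV'.old.inj) h,
    Finset.card_eq_sum_ones, Nat.cast_sum, Nat.cast_one]
  congr 1
  · simp only [uCrosses_image_old, Function.comp_apply]
  · refine Finset.sum_congr rfl fun e he => ?_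
    have he' : e ∈ (uSteps (ChPathList l q)).toFinset := (Finset.mem_filter.mp he).1
    exact (dif_pos (Finset.mem_union_right _ he')).trans (hnew ⟨e, _⟩
      (Finset.disjoint_right.mp disjoint_image_ChE_uSteps_ChPathList he'))

theorem card_filter_uCrosses_ChPathList_eq_zero {T : Finset (ChV l q)} (hs : ChV.vs ∉ T)
    (ht : ChV.vt ∉ T) :
    #((uSteps (ChPathList l q)).toFinset.filter (uCrosses (T.image ChV'.old) ·)) = 0 := by
  rw [filter_uCrosses_uSteps_eq_empty, Finset.card_empty]
  simp [ChPathList, or_imp, forall_and, hs, ht]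

theorem card_filter_uCrosses_ChPathList_eq_one {T : Finset (ChV l q)}
    (h : ChV.vs ∈ T ↔ ChV.vt ∉ T) :
    #((uSteps (ChPathList l q)).toFinset.filter (uCrosses (T.image ChV'.old) ·)) = 1 := by
  by_cases hs : ChV.vs ∈ T
  · exact card_filter_uCrosses_uSteps_append (u := [ChV'.old ChV.vs]) (by simp) (by simp)
      (by simp [hs]) (by simp [or_imp, forall_and, h.mp hs])
  · have ht : ChV.vt ∈ T := not_not.mp (mt h.mpr hs)
    simp only [← uCrosses_compl (T.image ChV'.old)]
    exact card_filter_uCrosses_uSteps_append (u := ChV'.old ChV.vs :: _)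
      (w := [ChV'.old ChV.vt]) (by simp) (by simp) (by simp [hs]) (by simp [ht])

theorem comp_ChEmb_mem_SPpoly {y : ↥(ChE' l q) → ℝ} (hy : y ∈ STpoly Finset.univ (ChE' l q))
    (hnew : ∀ e : ↥(ChE' l q), e.val ∉ (ChE l q).image (Sym2.map ChV'.old) → y e = 1) :
    y ∘ ChEmb l q ∈ SPpoly Finset.univ (ChE l q) ChV.vs ChV.vt := by
  obtain ⟨hbound, hcut, hdeg⟩ := hy
  have hcut₀ {T : Finset (ChV l q)} (hs : ChV.vs ∉ T) (ht : ChV.vt ∉ T) :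
      uCut (ChE' l q) y (T.image ChV'.old) = uCut (ChE l q) (y ∘ ChEmb l q) T := by
    rw [uCut_ChE'_image_old hnew, card_filter_uCrosses_ChPathList_eq_zero hs ht,
      Nat.cast_zero, add_zero]
  have hcut₁ {T : Finset (ChV l q)} (h : ChV.vs ∈ T ↔ ChV.vt ∉ T) :
      uCut (ChE' l q) y (T.image ChV'.old) = uCut (ChE l q) (y ∘ ChEmb l q) T + 1 := by
    rw [uCut_ChE'_image_old hnew, card_filter_uCrosses_ChPathList_eq_one h, Nat.cast_one]
  have image_ne_univ {T : Finset (ChV l q)} {v : ChV l q} (hv : v ∉ T) :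
      T.image ChV'.old ≠ Finset.univ := fun h => hv (by simpa using h.ge (mem_univ (ChV'.old v)))
  have two_le {T : Finset (ChV l q)} (hT : T.Nonempty) (hs : ChV.vs ∉ T) (ht : ChV.vt ∉ T) :
      2 ≤ uCut (ChE l q) (y ∘ ChEmb l q) T :=
    hcut₀ hs ht ▸ hcut _ (subset_univ _) (hT.image _) (image_ne_univ hs)
  have one_le {T : Finset (ChV l q)} (h : ChV.vs ∈ T ↔ ChV.vt ∉ T) :
      1 ≤ uCut (ChE l q) (y ∘ ChEmb l q) T := by
    obtain ⟨hT, v, hv⟩ : T.Nonempty ∧ ∃ v, v ∉ T := by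
      by_cases hs : ChV.vs ∈ T
      · exact ⟨⟨_, hs⟩, _, h.mp hs⟩
      · exact ⟨⟨_, not_not.mp (mt h.mpr hs)⟩, _, hs⟩
    have := hcut _ (subset_univ _) (hT.image _) (image_ne_univ hv)
    linarith [hcut₁ h]
  refine ⟨fun e => hbound _, fun S _ hS hSne => ⟨fun h => ?_, fun h => one_le (by tauto)⟩,
    fun v _ hs ht => ?_, ?_, ?_⟩
  · by_cases hs : ChV.vs ∈ S
    · rw [← uCut_compl]
      exact two_le (sdiff_nonempty.mpr fun h => hSne (univ_subset_iff.mp h)) (by simp [hs])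
        (by simp [h.mp hs])
    · exact two_le hS hs (mt h.mpr hs)
  · have := hdeg (ChV'.old v) (mem_univ _)
    rwa [← image_singleton, hcut₀ (by simpa [eq_comm] using hs) (by simpa [eq_comm] using ht)]
      at this
  · have := hdeg (ChV'.old ChV.vs) (mem_univ _)
    rw [← image_singleton, hcut₁ (by simp)] at this
    linarith
  · have := hdeg (ChV'.old ChV.vt) (mem_univ _)
    rw [← image_singleton, hcut₁ (by simp)] at this
    linarith

end Cheung

theorem stmt12_general (r l q : ℕ)
    (x : ↥(ChE l q) → ℝ) (x' : ↥(ChE' l q) → ℝ)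
    (hagree : ∀ (e : ↥(ChE l q)) (e' : ↥(ChE' l q)),
      e'.val = Sym2.map ChV'.old e.val → x' e' = x e)
    (hnew : ∀ e' : ↥(ChE' l q),
      e'.val ∉ (ChE l q).image (Sym2.map ChV'.old) → x' e' = 1)
    (hx' : x' ∈ lsNplus^[r] (STpoly Finset.univ (ChE' l q))) :
    x ∈ lsNplus^[r] (SPpoly Finset.univ (ChE l q) ChV.vs ChV.vt) := by
  have hx : x = x' ∘ ChEmb l q := funext fun e => (hagree e (ChEmb l q e) rfl).symm
  exact hx ▸ comp_mem_lsNplus_iterate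
    (New := {e : ↥(ChE' l q) | e.val ∉ (ChE l q).image (Sym2.map ChV'.old)})
    (fun y hy hnew => comp_ChEmb_mem_SPpoly hy hnew) r x' hx' hnew

theorem stmt12 (r l q : ℕ) (hl : 1 ≤ l)
    (x : ↥(ChE l q) → ℝ) (x' : ↥(ChE' l q) → ℝ)
    (hagree : ∀ (e : ↥(ChE l q)) (e' : ↥(ChE' l q)),
      e'.val = Sym2.map ChV'.old e.val → x' e' = x e)
    (hnew : ∀ e' : ↥(ChE' l q),
      e'.val ∉ (ChE l q).image (Sym2.map ChV'.old) → x' e' = 1)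
    (hx' : x' ∈ lsNplus^[r] (STpoly Finset.univ (ChE' l q))) :
    x ∈ lsNplus^[r] (SPpoly Finset.univ (ChE l q) ChV.vs ChV.vt) :=
  stmt12_general r l q x x' hagree hnew hx'

end TSPGap
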